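/- The Haar shift ℌ f = Σ_{I∈𝒟} ⟨f,h_I⟩ g_I is bounded on L²(ℝ) with operator norm at most √2, where g_I = Dil_I^{(2)} g and g = 2^{−1/2}(h_{(−1/2,0)} + h_{(0,1/2)}). -/

import Mathlib

open MeasureTheory

/-- The basic Haar function `h = -𝟙_{(-1/2,0)} + 𝟙_{(0,1/2)}`. -/
noncomputable def haarBase : ℝ → ℝ := fun x =>
  Set.indicator (Set.Ioo (0 : ℝ) (1 / 2)) (fun _ => (1 : ℝ)) x
    - Set.indicator (Set.Ioo (-(1 / 2) : ℝ) 0) (fun _ => (1 : ℝ)) x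

/-- The dyadic interval `2^k (j, j+1)`. -/
def dyadicI (k j : ℤ) : Set ℝ := Set.Ioo ((2 : ℝ) ^ k * j) ((2 : ℝ) ^ k * (j + 1))

/-- The `L²`-normalized Haar function `h_I` associated to the dyadic interval
`I = 2^k(j, j+1)`, of center `2^k (j + 1/2)` and length `2^k`. -/
noncomputable def haarD (k j : ℤ) : ℝ → ℝ := fun x =>
  ((2 : ℝ) ^ k) ^ (-(1 / 2) : ℝ) * haarBase ((x - (2 : ℝ) ^ k * (j + 1 / 2)) / (2 : ℝ) ^ k)

/-- `h_I^1 = |I|^{-1/2} 𝟙_I` for the dyadic interval `I = 2^k(j, j+1)`. -/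
noncomputable def haarOneD (k j : ℤ) : ℝ → ℝ := fun x =>
  ((2 : ℝ) ^ k) ^ (-(1 / 2) : ℝ) * Set.indicator (dyadicI k j) (fun _ => (1 : ℝ)) x

/-- The function `g = -𝟙_{(-1/2,-1/4)} + 𝟙_{(-1/4,1/4)} - 𝟙_{(1/4,1/2)}`. -/
noncomputable def gBase : ℝ → ℝ := fun x =>
  Set.indicator (Set.Ioo (-(1 / 4) : ℝ) (1 / 4)) (fun _ => (1 : ℝ)) x
    - Set.indicator (Set.Ioo (-(1 / 2) : ℝ) (-(1 / 4))) (fun _ => (1 : ℝ)) x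
    - Set.indicator (Set.Ioo ((1 / 4) : ℝ) (1 / 2)) (fun _ => (1 : ℝ)) x

/-- `g_I = Dil_I^{(2)} g` for the dyadic interval `I = 2^k(j, j+1)`. -/
noncomputable def gD (k j : ℤ) : ℝ → ℝ := fun x =>
  ((2 : ℝ) ^ k) ^ (-(1 / 2) : ℝ) * gBase ((x - (2 : ℝ) ^ k * (j + 1 / 2)) / (2 : ℝ) ^ k)

open Set Filter Function
open scoped ENNReal RealInnerProductSpace

/-!
Off the centre of `I`, `g_I = 2^{-1/2} (h_{I₋} - h_{I₊})`, where `I₋, I₊` are the halves of `I`.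
Every dyadic interval has a single parent, so `I ↦ I₋` and `I ↦ I₊` are injective, and by
orthonormality of the Haar system and Bessel's inequality each of `∑ ⟨f, h_I⟩ h_{I±}` has norm
at most `‖f‖`; the triangle inequality gives `√2` for every finite partial sum of the shift. The
pointwise series is then controlled by Fatou's lemma along finite partial sums.
-/

section
variable {α ι : Type*} [MeasurableSpace α] [Countable ι] {u : ι → α → ℝ}

lemma measurableSet_setOf_summable (hu : ∀ i, Measurable (u i)) :
    MeasurableSet {x | Summable fun i => u i x} := by
  have : {x | Summable fun i => u i x} = (fun x => ∑' i, ‖u i x‖ₑ) ⁻¹' {∞}ᶜ := by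
    ext x
    simp [tsum_enorm_ne_top_iff_summable_norm, summable_abs_iff]
  rw [this]
  exact (Measurable.tsum fun i => (hu i).enorm) (measurableSet_singleton ∞).compl

lemma eLpNorm_tsum_le_of_eLpNorm_sum_le (hu : ∀ i, Measurable (u i)) {p : ℝ≥0∞} {μ : Measure α}
    {C : ℝ≥0∞} (h : ∀ s : Finset ι, eLpNorm (fun x => ∑ i ∈ s, u i x) p μ ≤ C) :
    eLpNorm (fun x => ∑' i, u i x) p μ ≤ C := by
  set S := {x | Summable fun i => u i x}
  refine Lp.eLpNorm_le_of_ae_tendsto (u := atTop)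
    (f := fun s => S.indicator fun x => ∑ i ∈ s, u i x)
    (Eventually.of_forall fun s => (eLpNorm_indicator_le _).trans (h s)) (fun s => ?_)
    (ae_of_all _ fun x => ?_)
  · exact ((s.measurable_sum fun i _ => hu i).indicator
      (measurableSet_setOf_summable hu)).aestronglyMeasurable
  · -- `∑'` is junk `0` off `S`, so the partial sums restricted to `S` converge everywhere.
    by_cases hx : x ∈ S
    · simp only [indicator_of_mem hx]
      exact hx.hasSum
    · simp [indicator_of_notMem hx, tsum_eq_zero_of_not_summable hx]

end

lemma inner_toLp_toLp_real {α : Type*} [MeasurableSpace α] {μ : Measure α} {f g : α → ℝ}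
    (hf : MemLp f 2 μ) (hg : MemLp g 2 μ) : ⟪hf.toLp f, hg.toLp g⟫ = ∫ x, f x * g x ∂μ := by
  rw [L2.inner_def]
  refine integral_congr_ae ?_
  filter_upwards [hf.coeFn_toLp, hg.coeFn_toLp] with x hfx hgx
  simp [hfx, hgx, mul_comm]

lemma Orthonormal.norm_sum_inner_smul_comp_le {E ι : Type*} [NormedAddCommGroup E]
    [InnerProductSpace ℝ E] {e : ι → E} (he : Orthonormal ℝ e) {p : ι → ι} (hp : Injective p)
    (s : Finset ι) (x : E) : ‖∑ i ∈ s, ⟪e i, x⟫ • e (p i)‖ ≤ ‖x‖ := by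
  have hsq : ‖∑ i ∈ s, ⟪e i, x⟫ • e (p i)‖ ^ 2 = ∑ i ∈ s, ‖⟪e i, x⟫‖ ^ 2 := by
    have := (he.comp p hp).inner_sum (fun i => ⟪e i, x⟫) (fun i => ⟪e i, x⟫) s
    simp only [comp_apply] at this
    rw [← real_inner_self_eq_norm_sq, this]
    simp [sq]
  refine (pow_le_pow_iff_left₀ (norm_nonneg _) (norm_nonneg _) two_ne_zero).1 ?_
  exact hsq ▸ he.sum_inner_products_le x

lemma exists_eqOn_indicator_one {α : Type*} {J A : Set α} (h : J ⊆ A ∨ Disjoint J A) :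
    ∃ c : ℝ, EqOn (A.indicator (1 : α → ℝ)) (fun _ => c) J := by
  rcases h with h | h
  · exact ⟨1, fun x hx => indicator_of_mem (h hx) _⟩
  · exact ⟨0, fun x hx => indicator_of_notMem (h.notMem_of_mem_left hx) _⟩

lemma integral_mul_eq_zero_of_eqOn {α : Type*} [MeasurableSpace α] {μ : Measure α}
    {f g : α → ℝ} {s : Set α} {c : ℝ} (hf : EqOn f (fun _ => c) s) (hg : ∀ x ∉ s, g x = 0)
    (hg₀ : ∫ x, g x ∂μ = 0) : ∫ x, f x * g x ∂μ = 0 := by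
  have : (fun x => f x * g x) = fun x => c * g x := by
    funext x
    by_cases hx : x ∈ s
    · rw [hf hx]
    · simp [hg x hx]
  rw [this, integral_const_mul, hg₀, mul_zero]

lemma indicator_one_sub_sq {α : Type*} {A B : Set α} (h : Disjoint A B) (x : α) :
    (A.indicator 1 x - B.indicator 1 x) ^ 2 = A.indicator (1 : α → ℝ) x + B.indicator 1 x := by
  by_cases hA : x ∈ A
  · simp [hA, h.notMem_of_mem_left hA]
  · by_cases hB : x ∈ B <;> simp [hA, hB]

lemma div_sub_mem_Ioo_iff {L : ℝ} (hL : 0 < L) (m u v x : ℝ) :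
    (x - m) / L ∈ Ioo u v ↔ x ∈ Ioo (m + L * u) (m + L * v) := by
  rw [mem_Ioo, mem_Ioo, lt_div_iff₀ hL, div_lt_iff₀ hL]
  constructor <;> rintro ⟨h₁, h₂⟩ <;> constructor <;> linarith

lemma indicator_Ioo_sub_div {L : ℝ} (hL : 0 < L) (m u v x : ℝ) :
    (Ioo u v).indicator (fun _ => (1 : ℝ)) ((x - m) / L)
      = (Ioo (m + L * u) (m + L * v)).indicator 1 x := by
  simp only [indicator_apply, div_sub_mem_Ioo_iff hL, Pi.one_apply]

lemma rpow_neg_half_sq {L : ℝ} (hL : 0 ≤ L) : (L ^ (-(1 / 2) : ℝ)) ^ 2 = L⁻¹ := by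
  rw [← Real.rpow_natCast, ← Real.rpow_mul hL]
  norm_num [Real.rpow_neg_one]

lemma half_rpow_neg_half {L : ℝ} (hL : 0 ≤ L) :
    (L / 2) ^ (-(1 / 2) : ℝ) = √2 * L ^ (-(1 / 2) : ℝ) := by
  rw [Real.div_rpow hL zero_le_two, div_eq_mul_inv, ← Real.rpow_neg zero_le_two,
    Real.sqrt_eq_rpow]
  norm_num [mul_comm]

lemma zpow_sub_one_two (k : ℤ) : (2 : ℝ) ^ (k - 1) = 2 ^ k / 2 := by
  rw [zpow_sub_one₀ two_ne_zero, div_eq_mul_inv]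

lemma dyadicI_subset_or_disjoint {k k' : ℤ} (hk : k' ≤ k) (j j' : ℤ) :
    dyadicI k' j' ⊆ dyadicI k j ∨ Disjoint (dyadicI k' j') (dyadicI k j) := by
  obtain ⟨n, rfl⟩ := Int.le.dest hk
  have hscale : (2 : ℝ) ^ (k' + n) * j = 2 ^ k' * ((2 ^ n * j : ℤ) : ℝ) ∧
      (2 : ℝ) ^ (k' + n) * (j + 1) = 2 ^ k' * ((2 ^ n * j + 2 ^ n : ℤ) : ℝ) := by
    rw [zpow_add₀ two_ne_zero, zpow_natCast]; push_cast; constructor <;> ring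
  simp only [dyadicI, hscale.1, hscale.2]
  generalize 2 ^ n * j = a
  generalize (2 : ℤ) ^ n = N
  rcases (by omega : j' + 1 ≤ a ∨ a + N ≤ j' ∨ (a ≤ j' ∧ j' + 1 ≤ a + N)) with h | h | ⟨h₁, h₂⟩
  · right
    rw [Ioo_disjoint_Ioo]
    exact (min_le_left _ _).trans (le_max_of_le_right (by gcongr; exact_mod_cast h))
  · right
    rw [Ioo_disjoint_Ioo]
    exact (min_le_right _ _).trans (le_max_of_le_left (by gcongr))
  · left
    apply Ioo_subset_Ioo <;> gcongr
    exact_mod_cast h₂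

lemma dyadicI_disjoint (k : ℤ) {j j' : ℤ} (h : j ≠ j') :
    Disjoint (dyadicI k j) (dyadicI k j') := by
  rw [dyadicI, dyadicI, Ioo_disjoint_Ioo]
  rcases h.lt_or_gt with h | h
  · exact (min_le_left _ _).trans (le_max_of_le_right (by gcongr; exact_mod_cast h))
  · exact (min_le_right _ _).trans (le_max_of_le_left (by gcongr; exact_mod_cast h))

lemma dyadicI_child_subset (k j : ℤ) {i : ℤ} (hi₀ : 0 ≤ i) (hi₁ : i ≤ 1) :
    dyadicI (k - 1) (2 * j + i) ⊆ dyadicI k j := by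
  have hk : (0 : ℝ) < 2 ^ k := by positivity
  have hi₀' : (0 : ℝ) ≤ i := by exact_mod_cast hi₀
  have hi₁' : (i : ℝ) ≤ 1 := by exact_mod_cast hi₁
  rw [dyadicI, dyadicI, zpow_sub_one_two]
  push_cast
  apply Ioo_subset_Ioo <;> nlinarith

lemma integral_indicator_one_dyadicI (k j : ℤ) :
    ∫ x, (dyadicI k j).indicator 1 x = (2 : ℝ) ^ k := by
  have hk : (0 : ℝ) < 2 ^ k := by positivity
  rw [dyadicI, integral_indicator_one measurableSet_Ioo, Real.volume_real_Ioo_of_le (by nlinarith)]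
  ring

lemma haarD_eq (k j : ℤ) : haarD k j = fun x => ((2 : ℝ) ^ k) ^ (-(1 / 2) : ℝ) *
    ((dyadicI (k - 1) (2 * j + 1)).indicator 1 x - (dyadicI (k - 1) (2 * j)).indicator 1 x) := by
  have hk : (0 : ℝ) < 2 ^ k := by positivity
  funext x
  rw [haarD, haarBase, indicator_Ioo_sub_div hk, indicator_Ioo_sub_div hk, dyadicI, dyadicI,
    zpow_sub_one_two]
  push_cast
  congr 3 <;> congr 1 <;> ring

lemma haarD_eq_zero_of_notMem {k j : ℤ} {x : ℝ} (hx : x ∉ dyadicI k j) : haarD k j x = 0 := by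
  have h₀ : x ∉ dyadicI (k - 1) (2 * j) := fun h =>
    hx (dyadicI_child_subset k j le_rfl zero_le_one (by rwa [add_zero]))
  have h₁ : x ∉ dyadicI (k - 1) (2 * j + 1) := fun h =>
    hx (dyadicI_child_subset k j zero_le_one le_rfl h)
  simp [haarD_eq, h₀, h₁]

lemma exists_eqOn_haarD {k k' j j' : ℤ} (h : k' < k ∨ k' = k ∧ j' ≠ j) :
    ∃ c : ℝ, EqOn (haarD k j) (fun _ => c) (dyadicI k' j') := by
  rcases h with h | ⟨rfl, h⟩
  · obtain ⟨c₁, h₁⟩ := exists_eqOn_indicator_one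
      (dyadicI_subset_or_disjoint (by omega : k' ≤ k - 1) (2 * j + 1) j')
    obtain ⟨c₀, h₀⟩ := exists_eqOn_indicator_one
      (dyadicI_subset_or_disjoint (by omega : k' ≤ k - 1) (2 * j) j')
    refine ⟨((2 : ℝ) ^ k) ^ (-(1 / 2) : ℝ) * (c₁ - c₀), fun x hx => ?_⟩
    simp only [haarD_eq, h₁ hx, h₀ hx]
  · exact ⟨0, fun x hx => haarD_eq_zero_of_notMem ((dyadicI_disjoint k' h).notMem_of_mem_left hx)⟩

lemma integrable_indicator_one_dyadicI (k j : ℤ) :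
    Integrable ((dyadicI k j).indicator (1 : ℝ → ℝ)) :=
  (integrable_indicator_iff measurableSet_Ioo).2 (integrableOn_const measure_Ioo_lt_top.ne)

lemma integral_haarD (k j : ℤ) : ∫ x, haarD k j x = 0 := by
  rw [haarD_eq, integral_const_mul, integral_sub (integrable_indicator_one_dyadicI _ _)
    (integrable_indicator_one_dyadicI _ _), integral_indicator_one_dyadicI,
    integral_indicator_one_dyadicI, sub_self, mul_zero]

lemma integral_haarD_mul_self (k j : ℤ) : ∫ x, haarD k j x * haarD k j x = 1 := by
  have hk : (0 : ℝ) < 2 ^ k := by positivity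
  have hsq : ∀ x, haarD k j x * haarD k j x = (((2 : ℝ) ^ k) ^ (-(1 / 2) : ℝ)) ^ 2 *
      ((dyadicI (k - 1) (2 * j + 1)).indicator 1 x + (dyadicI (k - 1) (2 * j)).indicator 1 x) := by
    intro x
    rw [haarD_eq, ← indicator_one_sub_sq (dyadicI_disjoint _ (by omega))]
    ring
  simp_rw [hsq]
  rw [integral_const_mul, integral_add (integrable_indicator_one_dyadicI _ _)
    (integrable_indicator_one_dyadicI _ _), integral_indicator_one_dyadicI,
    integral_indicator_one_dyadicI, rpow_neg_half_sq hk.le, zpow_sub_one_two]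
  field_simp
  ring

lemma integral_haarD_mul_haarD {k k' j j' : ℤ} (h : k' < k ∨ k' = k ∧ j' ≠ j) :
    ∫ x, haarD k j x * haarD k' j' x = 0 := by
  obtain ⟨c, hc⟩ := exists_eqOn_haarD h
  exact integral_mul_eq_zero_of_eqOn hc (fun x => haarD_eq_zero_of_notMem) (integral_haarD k' j')

lemma gBase_eq {y : ℝ} (hy : y ≠ 0) :
    gBase y = haarBase (2 * y + 1 / 2) - haarBase (2 * y - 1 / 2) := by
  simp only [gBase, haarBase, indicator_apply, mem_Ioo]
  split_ifs <;> grind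

lemma gD_eq {k j : ℤ} {x : ℝ} (hx : x ≠ 2 ^ k * (j + 1 / 2)) :
    gD k j x = (√2)⁻¹ * (haarD (k - 1) (2 * j) x - haarD (k - 1) (2 * j + 1) x) := by
  have hk : (0 : ℝ) < 2 ^ k := by positivity
  have hy : (x - 2 ^ k * (j + 1 / 2)) / 2 ^ k ≠ 0 := div_ne_zero (sub_ne_zero.2 hx) hk.ne'
  have h₀ : (x - 2 ^ k / 2 * ((2 * j : ℤ) + 1 / 2)) / (2 ^ k / 2)
      = 2 * ((x - 2 ^ k * (j + 1 / 2)) / 2 ^ k) + 1 / 2 := by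
    push_cast; field_simp; ring
  have h₁ : (x - 2 ^ k / 2 * ((2 * j + 1 : ℤ) + 1 / 2)) / (2 ^ k / 2)
      = 2 * ((x - 2 ^ k * (j + 1 / 2)) / 2 ^ k) - 1 / 2 := by
    push_cast; field_simp; ring
  rw [gD, haarD, haarD, zpow_sub_one_two, h₀, h₁, gBase_eq hy, half_rpow_neg_half hk.le]
  field_simp

lemma gD_ae_eq (k j : ℤ) :
    gD k j =ᵐ[volume] (√2)⁻¹ • (haarD (k - 1) (2 * j) - haarD (k - 1) (2 * j + 1)) := by
  filter_upwards [Measure.ae_ne volume ((2 : ℝ) ^ k * (j + 1 / 2))] with x hx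
  exact gD_eq hx

lemma measurable_gD (k j : ℤ) : Measurable (gD k j) := by
  unfold gD gBase
  fun_prop (disch := exact measurableSet_Ioo)

lemma memLp_haarD (k j : ℤ) : MemLp (haarD k j) 2 volume := by
  rw [haarD_eq]
  exact ((memLp_indicator_const 2 measurableSet_Ioo 1 (Or.inr measure_Ioo_lt_top.ne)).sub
    (memLp_indicator_const 2 measurableSet_Ioo 1 (Or.inr measure_Ioo_lt_top.ne))).const_mul _

noncomputable def haarLp (q : ℤ × ℤ) : Lp ℝ 2 (volume : Measure ℝ) :=
  (memLp_haarD q.1 q.2).toLp _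

lemma orthonormal_haarLp : Orthonormal ℝ haarLp := by
  rw [orthonormal_iff_ite]
  rintro ⟨k, j⟩ ⟨k', j'⟩
  rw [haarLp, haarLp, inner_toLp_toLp_real]
  split_ifs with h
  · obtain ⟨rfl, rfl⟩ := Prod.mk.inj h
    exact integral_haarD_mul_self k j
  · rcases lt_trichotomy k k' with hk | rfl | hk
    · simp_rw [mul_comm (haarD k j _)]
      exact integral_haarD_mul_haarD (Or.inl hk)
    · exact integral_haarD_mul_haarD (Or.inr ⟨rfl, fun hj => h (congrArg (Prod.mk k) hj.symm)⟩)
    · exact integral_haarD_mul_haarD (Or.inl hk)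

lemma memLp_gD (k j : ℤ) : MemLp (gD k j) 2 volume :=
  (((memLp_haarD _ _).sub (memLp_haarD _ _)).const_smul _).ae_eq (gD_ae_eq k j).symm

lemma toLp_gD (k j : ℤ) : (memLp_gD k j).toLp (gD k j)
      = (√2)⁻¹ • (haarLp (k - 1, 2 * j) - haarLp (k - 1, 2 * j + 1)) := by
  have hsub := (memLp_haarD (k - 1) (2 * j)).sub (memLp_haarD (k - 1) (2 * j + 1))
  rw [MemLp.toLp_congr _ (hsub.const_smul _) (gD_ae_eq k j), MemLp.toLp_const_smul _ hsub,
    MemLp.toLp_sub]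
  rfl

lemma eLpNorm_haarShift_sum_le {f : ℝ → ℝ} (hf : MemLp f 2 volume) (s : Finset (ℤ × ℤ)) :
    eLpNorm (fun x => ∑ q ∈ s, (∫ y, f y * haarD q.1 q.2 y) * gD q.1 q.2 x) 2 volume
      ≤ ENNReal.ofReal √2 * eLpNorm f 2 volume := by
  set F := hf.toLp f
  have hcoeff (q : ℤ × ℤ) : ∫ y, f y * haarD q.1 q.2 y = ⟪haarLp q, F⟫ := by
    rw [haarLp, real_inner_comm, inner_toLp_toLp_real]
  set V := ∑ q ∈ s, ⟪haarLp q, F⟫ • (memLp_gD q.1 q.2).toLp (gD q.1 q.2)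
  have hV : (fun x => ∑ q ∈ s, (∫ y, f y * haarD q.1 q.2 y) * gD q.1 q.2 x) =ᵐ[volume] V := by
    filter_upwards [Lp.coeFn_fun_finsetSum s
        fun q : ℤ × ℤ => ⟪haarLp q, F⟫ • (memLp_gD q.1 q.2).toLp (gD q.1 q.2),
      ae_all_iff.2 fun q : ℤ × ℤ => Lp.coeFn_smul ⟪haarLp q, F⟫ ((memLp_gD q.1 q.2).toLp _),
      ae_all_iff.2 fun q : ℤ × ℤ => (memLp_gD q.1 q.2).coeFn_toLp] with x hsum hsmul hg
    rw [hsum]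
    simp [hsmul, hg, hcoeff]
  have hL : Injective fun q : ℤ × ℤ => (q.1 - 1, 2 * q.2) := fun a b h => by
    simp only [Prod.mk.injEq] at h
    ext <;> omega
  have hR : Injective fun q : ℤ × ℤ => (q.1 - 1, 2 * q.2 + 1) := fun a b h => by
    simp only [Prod.mk.injEq] at h
    ext <;> omega
  have hsplit : V = (√2)⁻¹ • (∑ q ∈ s, ⟪haarLp q, F⟫ • haarLp (q.1 - 1, 2 * q.2)
      - ∑ q ∈ s, ⟪haarLp q, F⟫ • haarLp (q.1 - 1, 2 * q.2 + 1)) := by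
    simp only [V, toLp_gD, smul_sub, Finset.smul_sum, Finset.sum_sub_distrib, smul_comm (√2)⁻¹]
  have hnorm : ‖V‖ ≤ √2 * ‖F‖ :=
    calc ‖V‖ ≤ (√2)⁻¹ * (‖F‖ + ‖F‖) := by
          rw [hsplit, norm_smul, Real.norm_of_nonneg (by positivity)]
          gcongr
          exact (norm_sub_le _ _).trans
            (add_le_add (orthonormal_haarLp.norm_sum_inner_smul_comp_le hL s F)
              (orthonormal_haarLp.norm_sum_inner_smul_comp_le hR s F))
      _ = √2 * ‖F‖ := by rw [← two_mul, ← mul_assoc, inv_mul_eq_div, Real.div_sqrt]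
  rw [eLpNorm_congr_ae hV, ← Lp.enorm_def, ← Lp.enorm_toLp hf, ← ofReal_norm,
    ← ofReal_norm, ← ENNReal.ofReal_mul (by positivity)]
  exact ENNReal.ofReal_le_ofReal hnorm

/-- the Haar shift `ℌ f = Σ_{I∈𝒟} ⟨f,h_I⟩ g_I` is bounded on `L²(ℝ)` with
operator norm at most `√2`. -/
theorem haar_shift_bounded (f : ℝ → ℝ) (hf : MemLp f 2 volume) :
    eLpNorm (fun x => ∑' q : ℤ × ℤ, (∫ y : ℝ, f y * haarD q.1 q.2 y) * gD q.1 q.2 x)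
        2 volume
      ≤ ENNReal.ofReal (Real.sqrt 2) * eLpNorm f 2 volume := by
  have hmeas (q : ℤ × ℤ) : Measurable fun x => (∫ y, f y * haarD q.1 q.2 y) * gD q.1 q.2 x :=
    (measurable_gD q.1 q.2).const_mul _
  exact eLpNorm_tsum_le_of_eLpNorm_sum_le hmeas (eLpNorm_haarShift_sum_le hf)
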